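/- arXiv:1908.00933 — 2 statements merged into one kernel-verified Lean document; each statement's English description precedes it below -/
import Mathlib

section
/- Let μ be a probability measure on ℙ^n with I(μ) < +∞, and let E := { ζ ∈ ℙ^n : G_μ(ζ) = −∞ }. Then E is κ-polar. -/
open MeasureTheory Filter Topology ENNReal

noncomputable section

/-- Complex projective space ℙⁿ, the projectivization of ℂ^{n+1}. -/
abbrev Pn (n : ℕ) : Type := Projectivization ℂ (EuclideanSpace ℂ (Fin (n + 1)))

instance (n : ℕ) : TopologicalSpace (Pn n) := instTopologicalSpaceQuotient
instance (n : ℕ) : MeasurableSpace (Pn n) := borel _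
instance (n : ℕ) : BorelSpace (Pn n) := ⟨rfl⟩

variable {n : ℕ}

/-- The quantity |ζ∧η| / (|ζ||η|) ∈ [0,1], computed on (arbitrary) representatives,
where |ζ∧η|² = |ζ|²|η|² − |⟨ζ,η⟩|². -/
def pratio (x y : Pn n) : ℝ :=
  Real.sqrt (‖x.rep‖ ^ 2 * ‖y.rep‖ ^ 2 - ‖(inner ℂ x.rep y.rep : ℂ)‖ ^ 2) /
    (‖x.rep‖ * ‖y.rep‖)

/-- −G(ζ,η) ∈ [0,+∞], where G(ζ,η) = log (|ζ∧η| / (|ζ||η|)) is the projective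
logarithmic kernel. -/
def negG (x y : Pn n) : ℝ≥0∞ :=
  if pratio x y = 0 then ∞ else ENNReal.ofReal (-Real.log (pratio x y))

/-- The projective logarithmic potential G_μ(ζ) = ∫ G(ζ,η) dμ(η) ∈ [−∞,0]. -/
def potential (μ : Measure (Pn n)) (x : Pn n) : EReal :=
  -((∫⁻ y, negG x y ∂μ : ℝ≥0∞) : EReal)

/-- The mutual projective logarithmic energy I(μ,ν) = −∬ G(ζ,η) dμ(η) dν(ζ) ∈ [0,+∞]. -/
def mutEnergy (μ ν : Measure (Pn n)) : ℝ≥0∞ :=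
  ∫⁻ x, ∫⁻ y, negG x y ∂μ ∂ν

/-- The projective logarithmic energy I(μ) = −∬ G(ζ,η) dμ(η) dμ(ζ) ∈ [0,+∞]. -/
def energy (μ : Measure (Pn n)) : ℝ≥0∞ := mutEnergy μ μ

/-- The (closed) support of a Borel measure. -/
def msupport (μ : Measure (Pn n)) : Set (Pn n) :=
  {x | ∀ U : Set (Pn n), IsOpen U → x ∈ U → μ U ≠ 0}

/-- The Robin constant γ(E) = inf { I(μ) : μ probability measure, supp μ ⊆ E }. -/
def robin (E : Set (Pn n)) : ℝ≥0∞ :=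
  ⨅ (μ : Measure (Pn n)) (_ : IsProbabilityMeasure μ) (_ : msupport μ ⊆ E), energy μ

/-- The projective logarithmic capacity κ(E) = e^{−γ(E)}. -/
def kappa (E : Set (Pn n)) : ℝ≥0∞ := EReal.exp (-(robin E : EReal))

/-- A set is κ-polar if every probability measure supported in it has infinite energy. -/
def IsPolar (E : Set (Pn n)) : Prop :=
  ∀ μ : Measure (Pn n), IsProbabilityMeasure μ → msupport μ ⊆ E → energy μ = ∞

/-- Weak convergence of a sequence of measures: convergence of the integrals of all
continuous real functions. -/
def WeakTendsto (μs : ℕ → Measure (Pn n)) (μ : Measure (Pn n)) : Prop :=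
  ∀ f : C(Pn n, ℝ), Tendsto (fun j => ∫ x, f x ∂(μs j)) atTop (𝓝 (∫ x, f x ∂μ))

/-- The Fubini–Study geodesic distance, determined by sin (d(ζ,η)/√2) = |ζ∧η|/(|ζ||η|). -/
def gd (x y : Pn n) : ℝ := Real.sqrt 2 * Real.arcsin (pratio x y)


/-!
Write `t = cosSq x y` for the squared cosine of the Fubini–Study angle, so that
`-G = -log √(1 - t) = ∑_{m ≥ 1} t^m / (2m)`. Each kernel `t^m` is a finite sum
`∑ᵢ fᵢ(x) conj (fᵢ(y))` of bounded continuous features (products of entries of the rank-one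
projections onto the lines `x` and `y`), so its mutual energy is `Re ∑ᵢ (∫ fᵢ dν) conj (∫ fᵢ dμ)`,
and the elementary bound `2 Re (a conj b) ≤ |a|² + |b|²` gives `2 I(μ, ν) ≤ I(μ) + I(ν)`.
If `ν` lives where `G_μ = -∞`, then `I(μ, ν) = ∞`, hence `I(ν) = ∞` as soon as `I(μ) < ∞`.
-/

open scoped ComplexConjugate

theorem HereditarilyLindelofSpace.of_continuous_surjective {X Y : Type*} [TopologicalSpace X]
    [TopologicalSpace Y] [HereditarilyLindelofSpace X] {f : X → Y} (hf : Continuous f)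
    (hsurj : Function.Surjective f) : HereditarilyLindelofSpace Y :=
  ⟨fun t _ => Set.image_preimage_eq t hsurj ▸ (HereditarilyLindelofSpace.isLindelof _).image hf⟩

theorem sum_mul_conj_pow {ι : Type*} [Fintype ι] (a b : ι → ℂ) (m : ℕ) :
    (∑ i, a i * conj (b i)) ^ m = ∑ g : Fin m → ι, (∏ l, a (g l)) * conj (∏ l, b (g l)) := by
  simp only [Fintype.sum_pow, map_prod, Finset.prod_mul_distrib]

section KernelEnergy

variable {X : Type*} [MeasurableSpace X] {μ ν : Measure X}

theorem ofReal_integral_integral_eq_sum {ι : Type*} [Fintype ι] {K : X → X → ℝ} {f : ι → X → ℂ}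
    (hK : ∀ x y, (K x y : ℂ) = ∑ i, f i x * conj (f i y))
    (hμ : ∀ i, Integrable (f i) μ) (hν : ∀ i, Integrable (f i) ν) :
    ((∫ x, ∫ y, K x y ∂μ ∂ν : ℝ) : ℂ) = ∑ i, (∫ x, f i x ∂ν) * conj (∫ y, f i y ∂μ) := by
  have hconj : ∀ i, Integrable (fun y => conj (f i y)) μ := fun i =>
    Complex.conjCLE.toContinuousLinearMap.integrable_comp (hμ i)
  have hinner : ∀ x, ((∫ y, K x y ∂μ : ℝ) : ℂ) = ∑ i, f i x * conj (∫ y, f i y ∂μ) := by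
    intro x
    rw [← integral_complex_ofReal]
    simp_rw [hK, ← integral_conj]
    rw [integral_finsetSum _ fun i _ => (hconj i).const_mul _]
    simp_rw [integral_const_mul]
  rw [← integral_complex_ofReal]
  simp_rw [hinner]
  rw [integral_finsetSum _ fun i _ => (hν i).mul_const _]
  simp_rw [integral_mul_const]

theorem two_mul_integral_integral_le_of_eq_sum {ι : Type*} [Fintype ι] {K : X → X → ℝ}
    {f : ι → X → ℂ} (hK : ∀ x y, (K x y : ℂ) = ∑ i, f i x * conj (f i y))
    (hμ : ∀ i, Integrable (f i) μ) (hν : ∀ i, Integrable (f i) ν) :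
    2 * ∫ x, ∫ y, K x y ∂μ ∂ν ≤ (∫ x, ∫ y, K x y ∂μ ∂μ) + ∫ x, ∫ y, K x y ∂ν ∂ν := by
  have hre : ∀ ρ σ : Measure X, (∀ i, Integrable (f i) ρ) → (∀ i, Integrable (f i) σ) →
      ∫ x, ∫ y, K x y ∂ρ ∂σ = ∑ i, ((∫ x, f i x ∂σ) * conj (∫ y, f i y ∂ρ)).re := by
    intro ρ σ hρ hσ
    rw [← Complex.re_sum, ← ofReal_integral_integral_eq_sum hK hρ hσ, Complex.ofReal_re]
  rw [hre μ ν hμ hν, hre μ μ hμ hμ, hre ν ν hν hν, Finset.mul_sum, ← Finset.sum_add_distrib]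
  refine Finset.sum_le_sum fun i _ => ?_
  set a := ∫ x, f i x ∂ν
  set b := ∫ x, f i x ∂μ
  have hab : (a * conj b).re ≤ ‖a‖ * ‖b‖ := by
    simpa only [norm_mul, RCLike.norm_conj] using Complex.re_le_norm (a * conj b)
  simp only [Complex.mul_conj, Complex.ofReal_re, Complex.normSq_eq_norm_sq]
  nlinarith [sq_nonneg (‖a‖ - ‖b‖)]

theorem lintegral_lintegral_ofReal_eq [IsFiniteMeasure μ] [IsFiniteMeasure ν] {K : X → X → ℝ}
    (hK : Measurable (Function.uncurry K)) (h0 : ∀ x y, 0 ≤ K x y) {C : ℝ}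
    (hC : ∀ x y, K x y ≤ C) :
    ∫⁻ x, ∫⁻ y, ENNReal.ofReal (K x y) ∂μ ∂ν = ENNReal.ofReal (∫ x, ∫ y, K x y ∂μ ∂ν) := by
  have hbound : ∀ x y, ‖K x y‖ ≤ C := fun x y => by
    rw [Real.norm_of_nonneg (h0 x y)]; exact hC x y
  have hinner : ∀ x, ∫⁻ y, ENNReal.ofReal (K x y) ∂μ = ENNReal.ofReal (∫ y, K x y ∂μ) := fun x =>
    (ofReal_integral_eq_lintegral_ofReal
      (.of_bound (hK.comp measurable_prodMk_left).aestronglyMeasurable C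
        (.of_forall (hbound x))) (.of_forall (h0 x))).symm
  simp_rw [hinner]
  refine (ofReal_integral_eq_lintegral_ofReal (.of_bound
    (hK.stronglyMeasurable.integral_prod_right').aestronglyMeasurable (C * μ.real Set.univ)
    (.of_forall fun x => ?_)) (.of_forall fun x => integral_nonneg (h0 x))).symm
  simpa using norm_integral_le_of_norm_le_const (.of_forall (hbound x))

theorem lintegral_lintegral_tsum {ι : Type*} [Countable ι] [SFinite μ] {K : ι → X → X → ℝ≥0∞}
    (hK : ∀ i, Measurable (Function.uncurry (K i))) :
    ∫⁻ x, ∫⁻ y, ∑' i, K i x y ∂μ ∂ν = ∑' i, ∫⁻ x, ∫⁻ y, K i x y ∂μ ∂ν := by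
  rw [lintegral_congr fun x => lintegral_tsum (f := fun i y => K i x y) fun i =>
    ((hK i).comp measurable_prodMk_left).aemeasurable]
  exact lintegral_tsum fun i => (hK i).lintegral_prod_right'.aemeasurable

end KernelEnergy

theorem tsum_ofReal_eq_top_of_not_summable {ι : Type*} {f : ι → ℝ} (h0 : ∀ i, 0 ≤ f i)
    (hf : ¬Summable f) : ∑' i, ENNReal.ofReal (f i) = ∞ := by
  by_contra h
  exact hf ((ENNReal.summable_toReal h).congr fun i => ENNReal.toReal_ofReal (h0 i))

theorem not_summable_one_div_two_mul_succ : ¬Summable fun m : ℕ => 1 / (2 * ((m : ℝ) + 1)) := by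
  intro h
  refine Real.not_summable_one_div_natCast ((summable_nat_add_iff 1).1 ?_)
  refine (h.mul_left 2).congr fun m => ?_
  push_cast
  field_simp

def cosSq (x y : Pn n) : ℝ := ‖(inner ℂ x.rep y.rep : ℂ)‖ ^ 2 / (‖x.rep‖ ^ 2 * ‖y.rep‖ ^ 2)

theorem cosSq_nonneg (x y : Pn n) : 0 ≤ cosSq x y := by
  unfold cosSq; positivity

theorem cosSq_le_one (x y : Pn n) : cosSq x y ≤ 1 := by
  rw [cosSq, ← mul_pow]
  exact div_le_one_of_le₀ (pow_le_pow_left₀ (norm_nonneg _) (norm_inner_le_norm _ _) 2)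
    (by positivity)

theorem pratio_eq_sqrt_one_sub_cosSq (x y : Pn n) : pratio x y = √(1 - cosSq x y) := by
  have hx : ‖x.rep‖ ≠ 0 := norm_ne_zero_iff.2 x.rep_nonzero
  have hy : ‖y.rep‖ ≠ 0 := norm_ne_zero_iff.2 y.rep_nonzero
  rw [pratio, cosSq, one_sub_div (by positivity), Real.sqrt_div' _ (by positivity), ← mul_pow,
    Real.sqrt_sq (by positivity)]

theorem negG_eq_tsum (x y : Pn n) :
    negG x y = ∑' m : ℕ, ENNReal.ofReal (cosSq x y ^ (m + 1) / (2 * (m + 1))) := by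
  rw [negG, pratio_eq_sqrt_one_sub_cosSq]
  rcases (cosSq_le_one x y).eq_or_lt with h | h
  · simp only [h, sub_self, Real.sqrt_zero, if_true, one_pow]
    exact (tsum_ofReal_eq_top_of_not_summable (fun m => by positivity)
      not_summable_one_div_two_mul_succ).symm
  · have hpos : 0 < 1 - cosSq x y := sub_pos.2 h
    have hsum : HasSum (fun m : ℕ => cosSq x y ^ (m + 1) / (2 * (m + 1)))
        (-Real.log (1 - cosSq x y) / 2) := by
      refine ((Real.hasSum_pow_div_log_of_abs_lt_one
        ((abs_of_nonneg (cosSq_nonneg x y)).symm ▸ h)).div_const 2).congr_fun fun m => ?_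
      rw [div_div, mul_comm 2]
    rw [if_neg (Real.sqrt_pos.2 hpos).ne', Real.log_sqrt hpos.le, ← neg_div, ← hsum.tsum_eq,
      ENNReal.ofReal_tsum_of_nonneg (fun m => by have := cosSq_nonneg x y; positivity)
        hsum.summable]

def projEntry (p : Fin (n + 1) × Fin (n + 1)) : Pn n → ℂ :=
  Projectivization.lift (fun v => conj (v.1 p.1) * v.1 p.2 / (‖v.1‖ ^ 2 : ℝ)) (by
    rintro ⟨_, ha⟩ ⟨b, hb⟩ t rfl
    have ht : t ≠ 0 := by rintro rfl; simp at ha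
    simp only [PiLp.smul_apply, smul_eq_mul, norm_smul, map_mul, mul_pow]
    push_cast
    rw [← Complex.conj_mul', mul_mul_mul_comm,
      mul_div_mul_left _ _ (mul_ne_zero ((map_ne_zero _).2 ht) ht)])

theorem projEntry_apply (p : Fin (n + 1) × Fin (n + 1)) (x : Pn n) :
    projEntry p x = conj (x.rep p.1) * x.rep p.2 / (‖x.rep‖ ^ 2 : ℝ) := by
  conv_lhs => rw [← x.mk_rep]
  exact Projectivization.lift_mk _ _ _ _

theorem continuous_projEntry (p : Fin (n + 1) × Fin (n + 1)) :
    Continuous (projEntry p : Pn n → ℂ) := by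
  unfold projEntry Projectivization.lift
  refine Continuous.quotient_lift ?_ _
  refine Continuous.div (by fun_prop) (by fun_prop) fun v => ?_
  exact_mod_cast pow_ne_zero 2 (norm_ne_zero_iff.2 v.2)

theorem norm_projEntry_le_one (p : Fin (n + 1) × Fin (n + 1)) (x : Pn n) :
    ‖projEntry p x‖ ≤ 1 := by
  rw [projEntry_apply, norm_div, norm_mul, RCLike.norm_conj, Complex.norm_real,
    Real.norm_of_nonneg (by positivity), sq]
  exact div_le_one_of_le₀ (mul_le_mul (PiLp.norm_apply_le _ _) (PiLp.norm_apply_le _ _)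
    (norm_nonneg _) (norm_nonneg _)) (by positivity)

theorem ofReal_cosSq_eq_sum (x y : Pn n) :
    (cosSq x y : ℂ) = ∑ p, projEntry p x * conj (projEntry p y) := by
  simp only [projEntry_apply, cosSq, Fintype.sum_prod_type]
  push_cast
  rw [← Complex.mul_conj', PiLp.inner_apply]
  simp only [RCLike.inner_apply, map_sum, Finset.sum_mul_sum, map_div₀, map_mul, map_pow,
    Complex.conj_conj, Complex.conj_ofReal, Finset.sum_div]
  exact Finset.sum_congr rfl fun i _ => Finset.sum_congr rfl fun j _ => by ring

theorem measurable_uncurry_cosSq : Measurable (Function.uncurry (cosSq (n := n))) := by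
  have h : Function.uncurry (cosSq (n := n)) =
      fun q => (∑ p, projEntry p q.1 * conj (projEntry p q.2)).re := by
    ext ⟨x, y⟩
    rw [Function.uncurry_apply_pair, ← ofReal_cosSq_eq_sum, Complex.ofReal_re]
  have hm := fun p => (continuous_projEntry (n := n) p).measurable
  rw [h]
  fun_prop

theorem two_mul_integral_integral_cosSq_pow_le (k : ℕ) (μ ν : Measure (Pn n)) [IsFiniteMeasure μ]
    [IsFiniteMeasure ν] :
    2 * ∫ x, ∫ y, cosSq x y ^ k ∂μ ∂ν
      ≤ (∫ x, ∫ y, cosSq x y ^ k ∂μ ∂μ) + ∫ x, ∫ y, cosSq x y ^ k ∂ν ∂ν := by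
  have hint : ∀ (ρ : Measure (Pn n)) [IsFiniteMeasure ρ] (g : Fin k → Fin (n + 1) × Fin (n + 1)),
      Integrable (fun x => ∏ l, projEntry (g l) x) ρ := fun ρ _ g =>
    .of_bound (continuous_finsetProd _ fun l _ => continuous_projEntry (g l)).aestronglyMeasurable 1
      (.of_forall fun x => by
        rw [norm_prod]
        exact Finset.prod_le_one (fun _ _ => norm_nonneg _) fun l _ => norm_projEntry_le_one _ _)
  refine two_mul_integral_integral_le_of_eq_sum (fun x y => ?_) (hint μ) (hint ν)
  push_cast
  rw [ofReal_cosSq_eq_sum, sum_mul_conj_pow]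

theorem mutEnergy_eq_tsum (μ ν : Measure (Pn n)) [IsFiniteMeasure μ] [IsFiniteMeasure ν] :
    mutEnergy μ ν = ∑' m : ℕ,
      ENNReal.ofReal ((∫ x, ∫ y, cosSq x y ^ (m + 1) ∂μ ∂ν) / (2 * (m + 1))) := by
  simp_rw [mutEnergy, negG_eq_tsum]
  rw [lintegral_lintegral_tsum fun m =>
    ((measurable_uncurry_cosSq.pow_const _).div_const _).ennreal_ofReal]
  refine tsum_congr fun m => ?_
  rw [lintegral_lintegral_ofReal_eq ((measurable_uncurry_cosSq.pow_const _).div_const _)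
    (fun x y => by have := cosSq_nonneg x y; positivity) (C := 1) fun x y =>
      div_le_one_of_le₀ ((pow_le_one₀ (cosSq_nonneg x y) (cosSq_le_one x y)).trans
        (by linarith [m.cast_nonneg (α := ℝ)])) (by positivity)]
  simp_rw [integral_div]

theorem two_mul_mutEnergy_le (μ ν : Measure (Pn n)) [IsFiniteMeasure μ] [IsFiniteMeasure ν] :
    2 * mutEnergy μ ν ≤ energy μ + energy ν := by
  have hI : ∀ (ρ σ : Measure (Pn n)) (k : ℕ), 0 ≤ ∫ x, ∫ y, cosSq x y ^ k ∂ρ ∂σ := fun ρ σ k =>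
    integral_nonneg fun x => integral_nonneg fun y => pow_nonneg (cosSq_nonneg x y) k
  rw [energy, energy, mutEnergy_eq_tsum, mutEnergy_eq_tsum, mutEnergy_eq_tsum,
    ← ENNReal.tsum_mul_left, ← ENNReal.tsum_add]
  refine ENNReal.tsum_le_tsum fun m => ?_
  have hc : (0 : ℝ) < 2 * (m + 1) := by positivity
  rw [← ENNReal.ofReal_ofNat 2, ← ENNReal.ofReal_mul zero_le_two,
    ← ENNReal.ofReal_add (div_nonneg (hI _ _ _) hc.le) (div_nonneg (hI _ _ _) hc.le), ← add_div,
    mul_div_assoc']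
  exact ENNReal.ofReal_le_ofReal
    (div_le_div_of_nonneg_right (two_mul_integral_integral_cosSq_pow_le (m + 1) μ ν) hc.le)

instance : HereditarilyLindelofSpace (Pn n) :=
  .of_continuous_surjective continuous_quot_mk Quot.mk_surjective

theorem msupport_eq_support (μ : Measure (Pn n)) : msupport μ = μ.support := by
  ext x
  simp only [msupport, Measure.support_eq_forall_isOpen, Set.mem_ofPred_eq, pos_iff_ne_zero]
  exact forall_congr' fun U => Imp.swap

theorem potential_eq_bot_iff {μ : Measure (Pn n)} {x : Pn n} :
    potential μ x = ⊥ ↔ ∫⁻ y, negG x y ∂μ = ∞ := by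
  rw [potential, EReal.neg_eq_bot_iff, EReal.coe_ennreal_eq_top_iff]

theorem statement8 (n : ℕ) (μ : Measure (Pn n)) (hμ : IsProbabilityMeasure μ)
    (hfin : energy μ ≠ ∞) :
    IsPolar {ζ : Pn n | potential μ ζ = ⊥} := by
  intro ν hν hsupp
  by_contra hνfin
  have hpot : ∀ᵐ x ∂ν, ∫⁻ y, negG x y ∂μ = ∞ :=
    mem_of_superset ν.support_mem_ae
      ((msupport_eq_support ν ▸ hsupp).trans fun x hx => potential_eq_bot_iff.1 hx)
  have hmut : mutEnergy μ ν = ∞ := by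
    rw [mutEnergy, lintegral_congr_ae hpot]
    simp
  refine absurd (two_mul_mutEnergy_le μ ν) ?_
  rw [hmut, ENNReal.mul_top two_ne_zero, top_le_iff]
  exact ENNReal.add_ne_top.2 ⟨hfin, hνfin⟩
end
end

section
/- Let h : [0,1] → ℝ⁺ be a function with h(0) = 0 and ∫₀¹ h(s)/s ds < +∞, and let μ be a probability measure on ℙ^n such that μ(B(ζ,s)) ≤ h(s) for every ζ ∈ ℙ^n and every s ∈ [0,1], where B(ζ,s) is the ball of radius s for the geodesic distance d. Then the potential G_μ is bounded on ℙ^n (there is C > 0 with −C ≤ G_μ ≤ 0) and I(μ) < +∞. -/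
/-! Since `sin θ ≥ 2θ/π` on `[0, π/2]`, the quantity `|ζ∧η|/(|ζ||η|) = sin (d(ζ,η)/√2)` is at least
`d(ζ,η)/c` with `c = π/√2`, so `-G(ζ,η) ≤ log c - log d(ζ,η)`. By the layer-cake formula and the
substitution `s = e^{-t}`, `∫ -log d(ζ,η) dμ(η) ≤ ∫₀^∞ μ(B(ζ,e^{-t})) dt ≤ ∫₀¹ h(s)/s ds`, uniformly
in `ζ`; integrating once more bounds the energy. -/

open MeasureTheory Filter Topology ENNReal

noncomputable section

variable {n : ℕ}

open Real Set

/-- `-log r`, with the value `∞` at `r = 0`, so that `negG x y` is `negLog (pratio x y)`. -/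
def negLog (r : ℝ) : ℝ≥0∞ := if r = 0 then ∞ else ENNReal.ofReal (-log r)

lemma negLog_le_of_le_mul {c q r : ℝ} (hc : 0 < c) (hq : 0 ≤ q) (hqr : q ≤ c * r) :
    negLog r ≤ ENNReal.ofReal (log c) + negLog q := by
  rcases hq.eq_or_lt with rfl | hq
  · simp [negLog]
  have hr : 0 < r := pos_of_mul_pos_right (hq.trans_le hqr) hc.le
  rw [negLog, if_neg hr.ne', negLog, if_neg hq.ne']
  calc ENNReal.ofReal (-log r) ≤ ENNReal.ofReal (log c + -log q) := by
        gcongr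
        have := log_le_log hq hqr
        rw [log_mul hc.ne' hr.ne'] at this
        linarith
    _ ≤ _ := ENNReal.ofReal_add_le

lemma lintegral_negLog_le_lintegral_measure_lt {α : Type*} [MeasurableSpace α] (ν : Measure α)
    {r : α → ℝ} (hr : Measurable r) (hr0 : ∀ a, 0 ≤ r a) :
    ∫⁻ a, negLog (r a) ∂ν ≤ ∫⁻ t in Ioi 0, ν {a | r a < exp (-t)} := by
  by_cases hnull : ν {a | r a = 0} = 0
  · have hae : (fun a => negLog (r a)) =ᵐ[ν] fun a => ENNReal.ofReal (max (-log (r a)) 0) := by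
      filter_upwards [measure_eq_zero_iff_ae_notMem.1 hnull] with a ha
      rw [negLog, if_neg ha, ENNReal.ofReal_max, ENNReal.ofReal_zero, max_zero]
    rw [lintegral_congr_ae hae, lintegral_eq_lintegral_meas_lt (f := fun a => max (-log (r a)) 0)
      ν (ae_of_all _ fun a => le_max_right _ _) (hr.log.neg.max measurable_const).aemeasurable]
    refine setLIntegral_mono' measurableSet_Ioi fun t ht => measure_mono fun a ha => ?_
    have ht : 0 < t := ht
    have hlog : t < -log (r a) := (lt_max_iff.1 ha).resolve_right ht.not_gt
    have hra : 0 < r a := (hr0 a).lt_of_ne' fun h0 => by simp [h0] at hlog; linarith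
    exact (log_lt_iff_lt_exp hra).1 (by linarith)
  · -- a non-null zero set makes the right-hand side infinite
    calc ∫⁻ a, negLog (r a) ∂ν ≤ ∞ := le_top
      _ = ∫⁻ _ in Ioi (0 : ℝ), ν {a | r a = 0} := by
          rw [setLIntegral_const, Real.volume_Ioi, mul_top hnull]
      _ ≤ _ := lintegral_mono fun t => measure_mono fun a (ha : r a = 0) =>
          show r a < exp (-t) by rw [ha]; exact exp_pos _

lemma image_exp_neg_Ioi_zero : (fun t => exp (-t)) '' Ioi 0 = Ioo 0 1 := by
  ext s
  constructor
  · rintro ⟨t, ht, rfl⟩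
    exact ⟨exp_pos _, exp_lt_one_iff.2 (neg_neg_of_pos ht)⟩
  · rintro ⟨hs0, hs1⟩
    exact ⟨-log s, neg_pos.2 (log_neg hs0 hs1), by simp [exp_log hs0]⟩

lemma lintegral_Ioi_comp_exp_neg (g : ℝ → ℝ≥0∞) :
    ∫⁻ t in Ioi 0, g (exp (-t)) = ∫⁻ s in Ioo 0 1, ENNReal.ofReal s⁻¹ * g s := by
  have hderiv : ∀ t ∈ Ioi (0 : ℝ),
      HasDerivWithinAt (fun t => exp (-t)) (-exp (-t)) (Ioi 0) t := fun t _ => by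
    simpa using (hasDerivAt_neg t).exp.hasDerivWithinAt
  have hinj : InjOn (fun t => exp (-t)) (Ioi 0) := (exp_injective.comp neg_injective).injOn
  rw [← image_exp_neg_Ioi_zero,
    lintegral_image_eq_lintegral_abs_deriv_mul measurableSet_Ioi hderiv hinj]
  refine setLIntegral_congr_fun measurableSet_Ioi fun t _ => ?_
  rw [abs_neg, abs_of_pos (exp_pos _), ← mul_assoc, ← ENNReal.ofReal_mul (exp_pos _).le,
    mul_inv_cancel₀ (exp_pos _).ne', ENNReal.ofReal_one, one_mul]

theorem lintegral_negLog_le_of_measure_lt_le {α : Type*} [MeasurableSpace α] (ν : Measure α)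
    {r : α → ℝ} (hr : Measurable r) (hr0 : ∀ a, 0 ≤ r a) {m : ℝ → ℝ≥0∞}
    (hm : ∀ s ∈ Ioo 0 1, ν {a | r a < s} ≤ m s) :
    ∫⁻ a, negLog (r a) ∂ν ≤ ∫⁻ s in Ioo 0 1, ENNReal.ofReal s⁻¹ * m s :=
  calc ∫⁻ a, negLog (r a) ∂ν ≤ ∫⁻ t in Ioi 0, ν {a | r a < exp (-t)} :=
        lintegral_negLog_le_lintegral_measure_lt ν hr hr0
    _ ≤ ∫⁻ t in Ioi 0, m (exp (-t)) := setLIntegral_mono' measurableSet_Ioi fun _ ht =>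
        hm _ ((image_exp_neg_Ioi_zero).subset (mem_image_of_mem _ ht))
    _ = _ := lintegral_Ioi_comp_exp_neg m

lemma arcsin_le_pi_div_two_mul {u : ℝ} (h0 : 0 ≤ u) (h1 : u ≤ 1) : arcsin u ≤ π / 2 * u := by
  have hsin := mul_le_sin (arcsin_nonneg.2 h0) (arcsin_le_pi_div_two u)
  rw [sin_arcsin (by linarith) h1] at hsin
  have hπ := pi_pos
  calc arcsin u = π / 2 * (2 / π * arcsin u) := by field_simp
    _ ≤ π / 2 * u := by gcongr

section WedgeRatio

variable {E : Type*} [NormedAddCommGroup E] [InnerProductSpace ℂ E]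

def wedgeRatio (u v : E) : ℝ := √(‖u‖ ^ 2 * ‖v‖ ^ 2 - ‖(inner ℂ u v : ℂ)‖ ^ 2) / (‖u‖ * ‖v‖)

lemma wedgeRatio_smul_right (u v : E) {c : ℂ} (hc : c ≠ 0) :
    wedgeRatio u (c • v) = wedgeRatio u v := by
  have hc' : 0 < ‖c‖ := norm_pos_iff.2 hc
  rw [wedgeRatio, wedgeRatio, norm_smul, inner_smul_right, norm_mul,
    show ‖u‖ ^ 2 * (‖c‖ * ‖v‖) ^ 2 - (‖c‖ * ‖(inner ℂ u v : ℂ)‖) ^ 2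
      = ‖c‖ ^ 2 * (‖u‖ ^ 2 * ‖v‖ ^ 2 - ‖(inner ℂ u v : ℂ)‖ ^ 2) by ring,
    show ‖u‖ * (‖c‖ * ‖v‖) = ‖c‖ * (‖u‖ * ‖v‖) by ring,
    Real.sqrt_mul (sq_nonneg _), Real.sqrt_sq hc'.le, mul_div_mul_left _ _ hc'.ne']

lemma wedgeRatio_nonneg (u v : E) : 0 ≤ wedgeRatio u v := by
  unfold wedgeRatio; positivity

lemma wedgeRatio_le_one (u v : E) : wedgeRatio u v ≤ 1 := by
  refine div_le_one_of_le₀ ?_ (by positivity)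
  calc √(‖u‖ ^ 2 * ‖v‖ ^ 2 - ‖(inner ℂ u v : ℂ)‖ ^ 2) ≤ √((‖u‖ * ‖v‖) ^ 2) :=
        Real.sqrt_le_sqrt (by nlinarith [sq_nonneg ‖(inner ℂ u v : ℂ)‖])
    _ = ‖u‖ * ‖v‖ := Real.sqrt_sq (by positivity)

lemma continuousOn_wedgeRatio_right (u : E) (hu : u ≠ 0) :
    ContinuousOn (wedgeRatio u) {v | v ≠ 0} := by
  refine ContinuousOn.div (by fun_prop) (by fun_prop) fun v hv => ?_
  have := norm_ne_zero_iff.2 hu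
  have := norm_ne_zero_iff.2 (show v ≠ 0 from hv)
  positivity

end WedgeRatio

lemma pratio_mk (x : Pn n) {v : EuclideanSpace ℂ (Fin (n + 1))} (hv : v ≠ 0) :
    pratio x (Projectivization.mk ℂ v hv) = wedgeRatio x.rep v := by
  obtain ⟨a, ha⟩ := Projectivization.exists_smul_eq_mk_rep ℂ v hv
  change wedgeRatio x.rep (Projectivization.mk ℂ v hv).rep = _
  rw [← ha, Units.smul_def, wedgeRatio_smul_right _ _ a.ne_zero]

lemma continuous_pratio (x : Pn n) : Continuous (pratio x) :=
  isQuotientMap_quotient_mk'.continuous_iff.2 <|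
    ((continuousOn_wedgeRatio_right _ x.rep_nonzero).comp_continuous continuous_subtype_val
      Subtype.property).congr fun v => (pratio_mk x v.2).symm

lemma gd_nonneg (x y : Pn n) : 0 ≤ gd x y :=
  mul_nonneg (Real.sqrt_nonneg 2) (arcsin_nonneg.2 (wedgeRatio_nonneg _ _))

lemma gd_le_mul_pratio (x y : Pn n) : gd x y ≤ √2 * (π / 2) * pratio x y := by
  rw [gd, mul_assoc]
  gcongr
  exact arcsin_le_pi_div_two_mul (wedgeRatio_nonneg _ _) (wedgeRatio_le_one _ _)

lemma measurable_gd (x : Pn n) : Measurable (gd x) :=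
  (continuous_const.mul (continuous_arcsin.comp (continuous_pratio x))).measurable

theorem lintegral_negG_le (μ : Measure (Pn n)) [IsProbabilityMeasure μ] {m : ℝ → ℝ≥0∞}
    (hball : ∀ x, ∀ s ∈ Ioo 0 1, μ {y | gd x y < s} ≤ m s) (x : Pn n) :
    ∫⁻ y, negG x y ∂μ ≤
      ENNReal.ofReal (log (√2 * (π / 2))) + ∫⁻ s in Ioo 0 1, ENNReal.ofReal s⁻¹ * m s := by
  set c := √2 * (π / 2)
  have hc : 0 < c := by positivity
  calc ∫⁻ y, negG x y ∂μ ≤ ∫⁻ y, (ENNReal.ofReal (log c) + negLog (gd x y)) ∂μ :=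
        lintegral_mono fun y => negLog_le_of_le_mul hc (gd_nonneg x y) (gd_le_mul_pratio x y)
    _ = ENNReal.ofReal (log c) + ∫⁻ y, negLog (gd x y) ∂μ := by
        rw [lintegral_add_left measurable_const, lintegral_const, measure_univ, mul_one]
    _ ≤ _ := by
        gcongr
        exact lintegral_negLog_le_of_measure_lt_le μ (measurable_gd x) (gd_nonneg x) (hball x)

lemma potential_nonpos (μ : Measure (Pn n)) (x : Pn n) : potential μ x ≤ 0 :=
  EReal.neg_le_zero.2 (EReal.coe_ennreal_nonneg _)

lemma neg_toReal_le_potential {μ : Measure (Pn n)} {x : Pn n} {K : ℝ≥0∞} (hK : K ≠ ∞)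
    (hx : ∫⁻ y, negG x y ∂μ ≤ K) : ((-K.toReal : ℝ) : EReal) ≤ potential μ x := by
  rw [potential, EReal.coe_neg, EReal.neg_le_neg_iff, EReal.coe_ennreal_toReal hK]
  exact EReal.coe_ennreal_le_coe_ennreal_iff.2 hx

lemma energy_le {μ : Measure (Pn n)} [IsProbabilityMeasure μ] {K : ℝ≥0∞}
    (hK : ∀ x, ∫⁻ y, negG x y ∂μ ≤ K) : energy μ ≤ K :=
  (lintegral_mono hK).trans_eq (by rw [lintegral_const, measure_univ, mul_one])

theorem statement12_general (n : ℕ) (h : ℝ → ℝ)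
    (hint : (∫⁻ s in Set.Ioc (0 : ℝ) 1, ENNReal.ofReal (h s / s)) ≠ ∞)
    (μ : Measure (Pn n)) (hμ : IsProbabilityMeasure μ)
    (hball : ∀ ζ : Pn n, ∀ s ∈ Set.Icc (0 : ℝ) 1,
      μ {η : Pn n | gd ζ η < s} ≤ ENNReal.ofReal (h s)) :
    (∃ C : ℝ, 0 < C ∧ ∀ ζ : Pn n,
      ((-C : ℝ) : EReal) ≤ potential μ ζ ∧ potential μ ζ ≤ 0) ∧
    energy μ ≠ ∞ := by
  set K := ENNReal.ofReal (log (√2 * (π / 2))) +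
    ∫⁻ s in Ioo 0 1, ENNReal.ofReal s⁻¹ * ENNReal.ofReal (h s)
  have hbound : ∀ ζ, ∫⁻ y, negG ζ y ∂μ ≤ K :=
    lintegral_negG_le μ fun ζ s hs => hball ζ s (Ioo_subset_Icc_self hs)
  have hK : K ≠ ∞ := by
    refine add_ne_top.2 ⟨ofReal_ne_top, ne_top_of_le_ne_top hint ?_⟩
    calc ∫⁻ s in Ioo 0 1, ENNReal.ofReal s⁻¹ * ENNReal.ofReal (h s)
        = ∫⁻ s in Ioo 0 1, ENNReal.ofReal (h s / s) :=
          setLIntegral_congr_fun measurableSet_Ioo fun s hs => by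
            rw [div_eq_mul_inv, ofReal_mul' (inv_nonneg.2 hs.1.le), mul_comm]
      _ ≤ _ := lintegral_mono_set Ioo_subset_Ioc_self
  refine ⟨⟨K.toReal + 1, by positivity, fun ζ => ⟨?_, potential_nonpos μ ζ⟩⟩,
    ne_top_of_le_ne_top hK (energy_le hbound)⟩
  exact (EReal.coe_le_coe_iff.2 (by linarith)).trans (neg_toReal_le_potential hK (hbound ζ))

theorem statement12 (n : ℕ) (h : ℝ → ℝ) (hnn : ∀ s ∈ Set.Icc (0 : ℝ) 1, 0 ≤ h s)
    (h0 : h 0 = 0)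
    (hint : (∫⁻ s in Set.Ioc (0 : ℝ) 1, ENNReal.ofReal (h s / s)) ≠ ∞)
    (μ : Measure (Pn n)) (hμ : IsProbabilityMeasure μ)
    (hball : ∀ ζ : Pn n, ∀ s ∈ Set.Icc (0 : ℝ) 1,
      μ {η : Pn n | gd ζ η < s} ≤ ENNReal.ofReal (h s)) :
    (∃ C : ℝ, 0 < C ∧ ∀ ζ : Pn n,
      ((-C : ℝ) : EReal) ≤ potential μ ζ ∧ potential μ ζ ≤ 0) ∧
    energy μ ≠ ∞ :=
  statement12_general n h hint μ hμ hball

end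
end
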